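/- Let ζ₀ ∈ (0, √(2−√2)) be the unique zero of g₀(ζ) := ∫_ζ^1 √(t^{−2} − 1) dt − (1−ζ²)^{3/2}/(2−ζ²) in that interval, and define B := 2·(ζ₀²/√(1−ζ₀²))·∫_{ζ₀}^1 √(t^{−2} − 1) dt. Then 0.2692 < B < 0.2693. -/

import Mathlib

/-!
On `(0, 1]` the integral is elementary, `∫_ζ^1 √(t⁻² - 1) dt = arsech ζ - √(1 - ζ²)`, so `g₀`
is an explicit function with derivative `√(1 - ζ²) (ζ (4 - ζ²) / (2 - ζ²)² - 1 / ζ)`. On `(0, 1)`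
this is negative exactly when `ζ⁴ - 4ζ² + 2 > 0`, i.e. `ζ² < 2 - √2`, so `g₀` is strictly
decreasing on `(0, √(2 - √2))`. Exponential Taylor bounds give `g₀ 0.58132 > 0 > g₀ 0.58136`,
which traps `ζ₀`. At the zero the integral equals `(1 - ζ₀²)^{3/2} / (2 - ζ₀²)`, so
`B = 2ζ₀²(1 - ζ₀²) / (2 - ζ₀²)`, and the bounds on `ζ₀` give `0.2692 < B < 0.2693`.
-/

/-- The leading-order criticality function
`g₀(ζ) = ∫_ζ^1 √(t^{−2}−1) dt − (1−ζ²)^{3/2}/(2−ζ²)`. -/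
noncomputable def g0 (ζ : ℝ) : ℝ :=
  (∫ t in ζ..(1 : ℝ), Real.sqrt (1 / t ^ 2 - 1)) - (1 - ζ ^ 2) ^ ((3 : ℝ) / 2) / (2 - ζ ^ 2)

open Real Set Filter Topology

noncomputable def sqrtInvSqSubOneAntideriv (t : ℝ) : ℝ :=
  √(1 - t ^ 2) - log (1 + √(1 - t ^ 2)) + log t

lemma sqrt_inv_sq_sub_one_eq {t : ℝ} (ht : 0 < t) : √(1 / t ^ 2 - 1) = √(1 - t ^ 2) / t := by
  rw [show 1 / t ^ 2 - 1 = (1 - t ^ 2) / t ^ 2 by field_simp, sqrt_div' _ (by positivity),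
    sqrt_sq ht.le]

lemma rpow_three_halves_eq_mul_sqrt {x : ℝ} (hx : 0 ≤ x) : x ^ (3 / 2 : ℝ) = x * √x := by
  rw [show (3 / 2 : ℝ) = 1 + 1 / 2 by norm_num, rpow_add' hx (by norm_num), rpow_one,
    sqrt_eq_rpow]

lemma hasDerivAt_sqrt_one_sub_sq {x : ℝ} (hx : x ^ 2 < 1) :
    HasDerivAt (fun t => √(1 - t ^ 2)) (-x / √(1 - x ^ 2)) x := by
  refine (((hasDerivAt_pow 2 x).const_sub 1).sqrt (by linarith)).congr_deriv ?_
  field_simp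
  ring

lemma hasDerivAt_sqrtInvSqSubOneAntideriv {x : ℝ} (hx0 : 0 < x) (hx1 : x < 1) :
    HasDerivAt sqrtInvSqSubOneAntideriv (√(1 / x ^ 2 - 1)) x := by
  have hx2 : x ^ 2 < 1 := by nlinarith
  have hs : 0 < √(1 - x ^ 2) := sqrt_pos.mpr (by linarith)
  have hsq : √(1 - x ^ 2) ^ 2 = 1 - x ^ 2 := sq_sqrt (by linarith)
  have hS := hasDerivAt_sqrt_one_sub_sq hx2
  refine ((hS.sub ((hS.const_add 1).log (by positivity))).add
    (hasDerivAt_log hx0.ne')).congr_deriv ?_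
  rw [sqrt_inv_sq_sub_one_eq hx0]
  field_simp
  linear_combination (-√(1 - x ^ 2)) * hsq

lemma integral_sqrt_inv_sq_sub_one {ζ : ℝ} (h0 : 0 < ζ) (h1 : ζ ≤ 1) :
    ∫ t in ζ..1, √(1 / t ^ 2 - 1) = -sqrtInvSqSubOneAntideriv ζ := by
  have hpos : ∀ t ∈ Icc ζ 1, 0 < t := fun t ht => h0.trans_le ht.1
  have hcont : ContinuousOn sqrtInvSqSubOneAntideriv (Icc ζ 1) := by
    unfold sqrtInvSqSubOneAntideriv
    refine ContinuousOn.add ?_ (continuousOn_log.mono fun t ht => (hpos t ht).ne')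
    exact (by fun_prop : Continuous fun t : ℝ => √(1 - t ^ 2)).continuousOn.sub
      (ContinuousOn.log (by fun_prop) fun t _ => by positivity)
  have hint : IntervalIntegrable (fun t => √(1 / t ^ 2 - 1)) MeasureTheory.volume ζ 1 := by
    refine ContinuousOn.intervalIntegrable ?_
    rw [uIcc_of_le h1]
    exact ContinuousOn.sqrt (ContinuousOn.sub (continuousOn_const.div (by fun_prop)
      fun t ht => (pow_pos (hpos t ht) 2).ne') continuousOn_const)
  rw [intervalIntegral.integral_eq_sub_of_hasDerivAt_of_le h1 hcont
    (fun x hx => hasDerivAt_sqrtInvSqSubOneAntideriv (h0.trans hx.1) hx.2) hint]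
  simp [sqrtInvSqSubOneAntideriv]

lemma g0_eq_log_sub {ζ : ℝ} (h0 : 0 < ζ) (h1 : ζ ≤ 1) :
    g0 ζ = log ((1 + √(1 - ζ ^ 2)) / ζ) - √(1 - ζ ^ 2) * (3 - 2 * ζ ^ 2) / (2 - ζ ^ 2) := by
  have hA : 0 ≤ 1 - ζ ^ 2 := by nlinarith
  have hB : 2 - ζ ^ 2 ≠ 0 := by nlinarith
  rw [g0, integral_sqrt_inv_sq_sub_one h0 h1, rpow_three_halves_eq_mul_sqrt hA,
    sqrtInvSqSubOneAntideriv, log_div (by positivity) h0.ne']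
  field_simp
  ring

lemma hasDerivAt_g0 {x : ℝ} (hx0 : 0 < x) (hx1 : x < 1) :
    HasDerivAt g0 (√(1 - x ^ 2) * (x * (4 - x ^ 2) / (2 - x ^ 2) ^ 2 - 1 / x)) x := by
  have hA : 0 < 1 - x ^ 2 := by nlinarith
  have hB : 0 < 2 - x ^ 2 := by nlinarith
  have hclosed : (fun ζ => -sqrtInvSqSubOneAntideriv ζ - (1 - ζ ^ 2) ^ (3 / 2 : ℝ) / (2 - ζ ^ 2))
      =ᶠ[𝓝 x] g0 := by
    filter_upwards [Ioo_mem_nhds hx0 hx1] with ζ hζ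
    rw [g0, integral_sqrt_inv_sq_sub_one hζ.1 hζ.2.le]
  have hpow := ((hasDerivAt_pow 2 x).const_sub 1).rpow_const (p := 3 / 2) (Or.inl hA.ne')
  refine (((hasDerivAt_sqrtInvSqSubOneAntideriv hx0 hx1).neg.sub
    (hpow.div ((hasDerivAt_pow 2 x).const_sub 2) hB.ne')).congr_of_eventuallyEq
    hclosed.symm).congr_deriv ?_
  rw [sqrt_inv_sq_sub_one_eq hx0, rpow_three_halves_eq_mul_sqrt hA.le,
    show (3 / 2 : ℝ) - 1 = 1 / 2 by norm_num, ← sqrt_eq_rpow]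
  field_simp
  ring

lemma sq_mul_four_sub_sq_lt_two_sub_sq_sq {x : ℝ} (hx : x ^ 2 < 2 - √2) :
    x ^ 2 * (4 - x ^ 2) < (2 - x ^ 2) ^ 2 := by
  have h2 : √2 ^ 2 = 2 := sq_sqrt zero_le_two
  nlinarith [sqrt_nonneg 2]

lemma sqrt_two_sub_sqrt_two_lt_one : √(2 - √2) < 1 :=
  (sqrt_lt' one_pos).mpr (by linarith [one_lt_sqrt_two])

lemma strictAntiOn_g0 : StrictAntiOn g0 (Ioo 0 √(2 - √2)) := by
  have hderiv : ∀ x ∈ Ioo 0 √(2 - √2), HasDerivAt g0 _ x := fun x hx =>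
    hasDerivAt_g0 hx.1 (hx.2.trans sqrt_two_sub_sqrt_two_lt_one)
  refine strictAntiOn_of_hasDerivWithinAt_neg (convex_Ioo _ _)
    (fun x hx => (hderiv x hx).continuousAt.continuousWithinAt)
    (fun x hx => (hderiv x (interior_subset hx)).hasDerivWithinAt) fun x hx => ?_
  rw [interior_Ioo] at hx
  obtain ⟨hx0, hxc⟩ := hx
  have hx2 : x ^ 2 < 2 - √2 := (lt_sqrt hx0.le).mp hxc
  have hA : 0 < 1 - x ^ 2 := by nlinarith [one_lt_sqrt_two]
  have hB : 0 < 2 - x ^ 2 := by linarith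
  refine mul_neg_of_pos_of_neg (sqrt_pos.mpr hA) (sub_neg.mpr ?_)
  rw [div_lt_div_iff₀ (by positivity) hx0]
  nlinarith [sq_mul_four_sub_sq_lt_two_sub_sq_sq hx2]

lemma g0_pos : 0 < g0 0.58132 := by
  rw [g0_eq_log_sub (by norm_num) (by norm_num)]
  set s := √(1 - (0.58132 : ℝ) ^ 2) with hs
  have hs_lo : (0.813675031938 : ℝ) < s :=
    hs ▸ (lt_sqrt (by norm_num)).mpr (by norm_num)
  have hs_hi : s < 0.813675031939 := hs ▸ (sqrt_lt' (by norm_num)).mpr (by norm_num)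
  -- `exp_bound'` needs an argument at most `1`, hence the halving
  have hexp : exp 1.137796 < (1 + 0.813675031938) / 0.58132 := by
    have h := exp_bound' (x := 0.568898) (by norm_num) (by norm_num) (n := 10) (by norm_num)
    norm_num [Finset.sum_range_succ, Nat.factorial] at h
    rw [show (1.137796 : ℝ) = 0.568898 + 0.568898 by norm_num, exp_add]
    nlinarith [exp_pos 0.568898]
  have hlog : 1.137796 < log ((1 + s) / 0.58132) :=
    (lt_log_iff_exp_lt (by positivity)).mpr (hexp.trans (by gcongr))
  norm_num at hlog ⊢
  linarith

lemma g0_neg : g0 0.58136 < 0 := by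
  rw [g0_eq_log_sub (by norm_num) (by norm_num)]
  set s := √(1 - (0.58136 : ℝ) ^ 2) with hs
  have hs_lo : (0.813646452951 : ℝ) < s :=
    hs ▸ (lt_sqrt (by norm_num)).mpr (by norm_num)
  have hs_hi : s < 0.813646452952 := hs ▸ (sqrt_lt' (by norm_num)).mpr (by norm_num)
  have hexp : (1 + 0.813646452952) / 0.58136 < exp 1.13773 := by
    have h := sum_le_exp_of_nonneg (x := 0.568865) (by norm_num) 10
    norm_num [Finset.sum_range_succ, Nat.factorial] at h
    rw [show (1.13773 : ℝ) = 0.568865 + 0.568865 by norm_num, exp_add]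
    nlinarith [exp_pos 0.568865]
  have hlog : log ((1 + s) / 0.58136) < 1.13773 :=
    (log_lt_iff_lt_exp (by positivity)).mpr (lt_of_le_of_lt (by gcongr) hexp)
  norm_num at hlog ⊢
  linarith

/-- With `ζ₀` the unique zero of `g₀` in `(0, √(2−√2))` and
`B = 2 (ζ₀²/√(1−ζ₀²)) ∫_{ζ₀}^1 √(t^{−2}−1) dt`, one has `0.2692 < B < 0.2693`. -/
theorem stmt13 :
    ∀ ζ₀ ∈ Set.Ioo (0 : ℝ) (Real.sqrt (2 - Real.sqrt 2)), g0 ζ₀ = 0 →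
      0.2692 < 2 * (ζ₀ ^ 2 / Real.sqrt (1 - ζ₀ ^ 2))
          * ∫ t in ζ₀..(1 : ℝ), Real.sqrt (1 / t ^ 2 - 1)
        ∧ 2 * (ζ₀ ^ 2 / Real.sqrt (1 - ζ₀ ^ 2))
          * (∫ t in ζ₀..(1 : ℝ), Real.sqrt (1 / t ^ 2 - 1)) < 0.2693 := by
  intro ζ hζ hg0
  have hmem : ∀ x : ℝ, 0 < x → x ^ 2 < 2 - √2 → x ∈ Ioo 0 √(2 - √2) := fun x hx hx2 =>
    ⟨hx, (lt_sqrt hx.le).mpr hx2⟩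
  have ha := hmem 0.58132 (by norm_num) (by nlinarith [sqrt_two_lt_three_halves])
  have hb := hmem 0.58136 (by norm_num) (by nlinarith [sqrt_two_lt_three_halves])
  have hζa : 0.58132 < ζ := (strictAntiOn_g0.lt_iff_gt hζ ha).mp (hg0 ▸ g0_pos)
  have hζb : ζ < 0.58136 := (strictAntiOn_g0.lt_iff_gt hb hζ).mp (hg0 ▸ g0_neg)
  have hA : 0 < 1 - ζ ^ 2 := by nlinarith
  have hB : 0 < 2 - ζ ^ 2 := by nlinarith
  have hintegral : ∫ t in ζ..1, √(1 / t ^ 2 - 1) = (1 - ζ ^ 2) * √(1 - ζ ^ 2) / (2 - ζ ^ 2) := by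
    rw [← rpow_three_halves_eq_mul_sqrt hA.le]
    exact sub_eq_zero.mp hg0
  have hval : 2 * (ζ ^ 2 / √(1 - ζ ^ 2)) * ∫ t in ζ..1, √(1 / t ^ 2 - 1)
      = 2 * ζ ^ 2 * (1 - ζ ^ 2) / (2 - ζ ^ 2) := by
    rw [hintegral]
    field_simp [(sqrt_pos.mpr hA).ne']
  rw [hval, lt_div_iff₀ hB, div_lt_iff₀ hB]
  constructor <;> nlinarith [mul_pos (sub_pos.mpr hζa) (sub_pos.mpr hζb)]
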